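/- arXiv:1201.4687 — 8 statements merged into one kernel-verified Lean document; each statement's English description precedes it below -/
import Mathlib

section
/- Let E be a compatible coarse structure on a group G, let π_G : G × G → G be the shear map π_G(x,y) = y^{-1}x, and let F(E) = { π_G(E) : E ∈ E }. Then F(E) is a generating family on G (i.e., it contains a non-empty set and is closed under finite unions, products, and inverses), and E equals the coarse structure E_{F(E)} associated to F(E). -/
open Set Pointwise

/-- A coarse structure on `X`: a collection of entourages containing the diagonal,
closed under subsets, finite unions, inverses and compositions. -/
def IsCoarse {X : Type*} (E : Set (Set (X × X))) : Prop :=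
  ({p : X × X | p.1 = p.2} ∈ E) ∧
  (∀ A ∈ E, ∀ B : Set (X × X), B ⊆ A → B ∈ E) ∧
  (∀ A ∈ E, ∀ B ∈ E, A ∪ B ∈ E) ∧
  (∀ A ∈ E, Prod.swap '' A ∈ E) ∧
  (∀ A ∈ E, ∀ B ∈ E, {p : X × X | ∃ y, (p.1, y) ∈ A ∧ (y, p.2) ∈ B} ∈ E)

/-- `G(A × B)`: the `G`-saturation of `A × B` under the diagonal left action. -/
def GProd {G : Type*} [Group G] (A B : Set G) : Set (G × G) :=
  {p | ∃ g : G, ∃ a ∈ A, ∃ b ∈ B, p = (g * a, g * b)}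

/-- A subset of `G × G` is `G`-invariant for the diagonal left action. -/
def GInvariant {G : Type*} [Group G] (E : Set (G × G)) : Prop :=
  ∀ g : G, ∀ p ∈ E, (g * p.1, g * p.2) ∈ E

/-- The coarse structure associated to a family `F` of subsets of a group `G`. -/
def EF {G : Type*} [Group G] (F : Set (Set G)) : Set (Set (G × G)) :=
  {E | ∃ A ∈ F, E ⊆ GProd A A}

/-- A generating family for a compatible coarse structure on a group `G`. -/
structure IsGenFamily {G : Type*} [Group G] (F : Set (Set G)) : Prop where
  exists_nonempty : ∃ A ∈ F, A.Nonempty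
  union_mem : ∀ A ∈ F, ∀ B ∈ F, A ∪ B ∈ F
  mul_mem : ∀ A ∈ F, ∀ B ∈ F, A * B ∈ F
  inv_mem : ∀ A ∈ F, A⁻¹ ∈ F

/-- Image of an entourage under the shear map `(x, y) ↦ y⁻¹ * x`. -/
def shearImage {G : Type*} [Group G] (E : Set (G × G)) : Set G :=
  (fun p : G × G => p.2⁻¹ * p.1) '' E

/-- The family of shear-map images of the entourages of `E`. -/
def FofE {G : Type*} [Group G] (E : Set (Set (G × G))) : Set (Set G) :=
  shearImage '' E

/-- The completion of a family of subsets of `G`. -/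
def hatF {G : Type*} (F : Set (Set G)) : Set (Set G) :=
  {A | ∃ B ∈ F, A ⊆ B}

/-- A family `U` of subsets of `X` is `L`-disjoint. -/
def LDisjoint {X : Type*} (L : Set (X × X)) (U : Set (Set X)) : Prop :=
  ∀ A ∈ U, ∀ B ∈ U, A ≠ B → ∀ a ∈ A, ∀ b ∈ B, (a, b) ∉ L

/-- A family `U` of subsets of `X` is uniformly bounded for the coarse structure `E`. -/
def UnifBounded {X : Type*} (E : Set (Set (X × X))) (U : Set (Set X)) : Prop :=
  ∃ M ∈ E, ∀ A ∈ U, A ×ˢ A ⊆ M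

/-- `asdimLE E n` : the asymptotic dimension of the coarse structure `E` is at most `n`. -/
def asdimLE {X : Type*} (E : Set (Set (X × X))) (n : ℕ) : Prop :=
  ∀ L ∈ E, ∃ U : Fin (n + 1) → Set (Set X),
    (⋃ i, ⋃₀ U i) = Set.univ ∧ (∀ i, LDisjoint L (U i)) ∧ UnifBounded E (⋃ i, U i)

/-- A coarsely uniform (bornologous) map between coarse spaces. -/
def CoarselyUniform {X Y : Type*} (E : Set (Set (X × X))) (E' : Set (Set (Y × Y)))
    (f : X → Y) : Prop :=
  ∀ A ∈ E, Prod.map f f '' A ∈ E'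

/-- Two maps into a coarse space are close. -/
def Close {S X : Type*} (E : Set (Set (X × X))) (p q : S → X) : Prop :=
  {r : X × X | ∃ s : S, r = (p s, q s)} ∈ E

/-- A coarse embedding between coarse spaces. -/
def CoarseEmbedding {X Y : Type*} (E : Set (Set (X × X))) (E' : Set (Set (Y × Y)))
    (f : X → Y) : Prop :=
  CoarselyUniform E E' f ∧ ∀ A ∈ E', Prod.map f f ⁻¹' A ∈ E

/-- A bounded subset of a coarse space: a set of the form `A(x)`. -/
def IsBddSet {X : Type*} (E : Set (Set (X × X))) (B : Set X) : Prop :=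
  ∃ A ∈ E, ∃ x : X, B = {y | (y, x) ∈ A}

/-- A coarse space is connected if every point of `X × X` lies in some entourage. -/
def ConnectedCoarse {X : Type*} (E : Set (Set (X × X))) : Prop :=
  ∀ p : X × X, ∃ A ∈ E, p ∈ A

/-- The family `F|_H = { A ∩ H : A ∈ F }`, viewed as subsets of the subgroup `H`. -/
def restrictFamily {G : Type*} [Group G] (F : Set (Set G)) (H : Subgroup G) : Set (Set H) :=
  (fun A => (Subtype.val ⁻¹' A : Set H)) '' F

/-!
Write `shear (x, y) = y⁻¹ * x`. A `G`-invariant entourage `C` is determined by its shear image: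
`C = shear ⁻¹' (shearImage C)`. Since every entourage of a compatible coarse structure lies in an
invariant one, a set `S ⊆ G` belongs to `F(E)` exactly when `shear ⁻¹' S ∈ E`. Under this
dictionary `{1}`, `S⁻¹` and `S * T` correspond to the diagonal, the transpose and a composition of
entourages, which gives the generating-family axioms. Finally `G(A × A) ⊆ shear ⁻¹' (A⁻¹ * A)` and
`shear ⁻¹' S ⊆ G((S ∪ {1}) × (S ∪ {1}))`, so `E` and `E_{F(E)}` have the same members.
-/

section

variable {G : Type*} [Group G]

def IsCompatible (E : Set (Set (G × G))) : Prop :=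
  ∀ A ∈ E, ∃ A' ∈ E, A ⊆ A' ∧ GInvariant A'

def shear (p : G × G) : G := p.2⁻¹ * p.1

@[simp]
lemma shear_apply (x y : G) : shear (x, y) = y⁻¹ * x := rfl

lemma shear_surjective : Function.Surjective (shear : G × G → G) :=
  fun s => ⟨(s, 1), by simp⟩

lemma GInvariant.preimage_shearImage {C : Set (G × G)} (hC : GInvariant C) :
    shear ⁻¹' shearImage C = C := by
  refine Subset.antisymm ?_ (subset_preimage_image _ _)
  rintro ⟨x, y⟩ ⟨⟨p, q⟩, hpq, hshear⟩
  -- translating `(p, q)` by `y * q⁻¹` lands on `(x, y)`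
  simpa [mul_assoc, hshear] using hC (y * q⁻¹) _ hpq

lemma shear_preimage_one : shear ⁻¹' ({1} : Set G) = {p | p.1 = p.2} := by
  ext ⟨x, y⟩
  simp [inv_mul_eq_one, eq_comm]

lemma shear_preimage_inv (S : Set G) : shear ⁻¹' S⁻¹ = Prod.swap '' (shear ⁻¹' S) := by
  ext ⟨x, y⟩
  simp [image_swap_eq_preimage_swap]

lemma shear_preimage_mul_subset (S T : Set G) :
    shear ⁻¹' (S * T) ⊆
      {p | ∃ y, (p.1, y) ∈ shear ⁻¹' T ∧ (y, p.2) ∈ shear ⁻¹' S} := by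
  rintro ⟨x, z⟩ ⟨s, hs, t, ht, hst⟩
  refine ⟨z * s, ?_, ?_⟩
  · show (z * s)⁻¹ * x ∈ T
    rwa [mul_inv_rev, mul_assoc, ← shear_apply x z, ← hst, inv_mul_cancel_left]
  · simpa using hs

lemma GProd_subset_shear_preimage (A : Set G) : GProd A A ⊆ shear ⁻¹' (A⁻¹ * A) := by
  rintro _ ⟨g, a, ha, b, hb, rfl⟩
  exact ⟨b⁻¹, inv_mem_inv.mpr hb, a, ha, by simp [mul_assoc]⟩

lemma shear_preimage_subset_GProd (S : Set G) :
    shear ⁻¹' S ⊆ GProd (S ∪ {1}) (S ∪ {1}) := by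
  rintro ⟨x, y⟩ hxy
  exact ⟨y, y⁻¹ * x, Or.inl hxy, 1, Or.inr rfl, by simp⟩

section Compatible

variable {E : Set (Set (G × G))} (hE : IsCoarse E) (hcompat : IsCompatible E)
include hE hcompat

lemma mem_FofE_iff {S : Set G} : S ∈ FofE E ↔ shear ⁻¹' S ∈ E := by
  constructor
  · rintro ⟨A, hA, rfl⟩
    obtain ⟨A', hA', hAA', hA'inv⟩ := hcompat A hA
    refine hE.2.1 A' hA' _ ?_
    rw [← hA'inv.preimage_shearImage]
    exact preimage_mono (image_mono hAA')
  · intro hS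
    exact ⟨_, hS, image_preimage_eq S shear_surjective⟩

lemma isGenFamily_FofE : IsGenFamily (FofE E) := by
  have mem_iff := fun S => mem_FofE_iff (S := S) hE hcompat
  obtain ⟨hdiag, hsub, hunion, hswap, hcomp⟩ := hE
  refine ⟨⟨{1}, ?_, singleton_nonempty 1⟩, fun S hS T hT => ?_, fun S hS T hT => ?_, fun S hS => ?_⟩
  all_goals simp only [mem_iff] at *
  · rwa [shear_preimage_one]
  · rw [preimage_union]
    exact hunion _ hS _ hT
  · exact hsub _ (hcomp _ hT _ hS) _ (shear_preimage_mul_subset S T)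
  · rw [shear_preimage_inv]
    exact hswap _ hS

lemma EF_FofE : EF (FofE E) = E := by
  have hF := isGenFamily_FofE hE hcompat
  ext A
  constructor
  · rintro ⟨S, hS, hAS⟩
    have hSS : S⁻¹ * S ∈ FofE E := hF.mul_mem _ (hF.inv_mem S hS) S hS
    exact hE.2.1 _ ((mem_FofE_iff hE hcompat).mp hSS) A
      (hAS.trans (GProd_subset_shear_preimage S))
  · intro hA
    have hone : ({1} : Set G) ∈ FofE E := by
      rw [mem_FofE_iff hE hcompat, shear_preimage_one]
      exact hE.1
    refine ⟨shearImage A ∪ {1}, hF.union_mem _ ⟨A, hA, rfl⟩ _ hone, ?_⟩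
    exact (subset_preimage_image shear A).trans (shear_preimage_subset_GProd _)

end Compatible

end

theorem stmt_1 {G : Type*} [Group G] (E : Set (Set (G × G))) (hE : IsCoarse E)
    (hcompat : ∀ A ∈ E, ∃ A' ∈ E, A ⊆ A' ∧ GInvariant A') :
    IsGenFamily (FofE E) ∧ E = EF (FofE E) :=
  ⟨isGenFamily_FofE hE hcompat, (EF_FofE hE hcompat).symm⟩
end

section
/- Let G be a Hausdorff topological group with topology τ and let d be a left invariant pseudo-metric on G. The group-compact coarse structure on G coincides with the bounded coarse structure associated to d if and only if every relatively compact subset of G is d-bounded and every d-bounded subset of G is relatively compact. -/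
open Set Pointwise

/-!
By left invariance, `d` is bounded on `G(K × K)` exactly when it is bounded on `K`. Conversely,
an entourage `E` lies in `G(S × {1})` for its shear image `S = {y⁻¹x | (x, y) ∈ E}`, and
`d(y⁻¹x, 1) = d(x, y)`, so `S` is `d`-bounded whenever `E` is. Finally, a set `A` with
`A × A ⊆ G(K × K)` lies in `a K⁻¹K` for any `a ∈ A`, hence is relatively compact when `K` is
compact (topological groups are R₁, so closures of relatively compact sets are compact).
-/

section DistBounded

variable {X : Type*}

def IsDistBounded (d : X → X → ℝ) (A : Set X) : Prop :=
  ∃ C : ℝ, ∀ x ∈ A, ∀ y ∈ A, d x y ≤ C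

def distBoundedEntourages (d : X → X → ℝ) : Set (Set (X × X)) :=
  {E | ∃ C : ℝ, ∀ p ∈ E, d p.1 p.2 ≤ C}

theorem IsDistBounded.prod_mem_distBoundedEntourages {d : X → X → ℝ} {A : Set X}
    (hA : IsDistBounded d A) : A ×ˢ A ∈ distBoundedEntourages d :=
  let ⟨C, hC⟩ := hA
  ⟨C, fun p hp => hC p.1 hp.1 p.2 hp.2⟩

theorem isDistBounded_of_prod_mem_distBoundedEntourages {d : X → X → ℝ} {A : Set X}
    (hA : A ×ˢ A ∈ distBoundedEntourages d) : IsDistBounded d A :=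
  let ⟨C, hC⟩ := hA
  ⟨C, fun x hx y hy => hC (x, y) ⟨hx, hy⟩⟩

end DistBounded

section GProd

variable {G : Type*} [Group G]

theorem GProd_mono {A A' B B' : Set G} (hA : A ⊆ A') (hB : B ⊆ B') :
    GProd A B ⊆ GProd A' B' := by
  rintro p ⟨g, a, ha, b, hb, rfl⟩
  exact ⟨g, a, hA ha, b, hB hb, rfl⟩

theorem prod_subset_GProd (A B : Set G) : A ×ˢ B ⊆ GProd A B := by
  rintro ⟨a, b⟩ ⟨ha, hb⟩
  exact ⟨1, a, ha, b, hb, by simp⟩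

theorem subset_GProd_shearImage_one (E : Set (G × G)) : E ⊆ GProd (shearImage E) {1} := by
  rintro ⟨x, y⟩ hp
  exact ⟨y, y⁻¹ * x, ⟨(x, y), hp, rfl⟩, 1, rfl, by simp⟩

theorem shearImage_GProd_subset (A B : Set G) : shearImage (GProd A B) ⊆ B⁻¹ * A := by
  rintro _ ⟨_, ⟨g, a, ha, b, hb, rfl⟩, rfl⟩
  refine ⟨b⁻¹, inv_mem_inv.mpr hb, a, ha, ?_⟩
  simp [mul_assoc]

end GProd

section LeftInvariant

variable {G : Type*} [Group G] {d : G → G → ℝ}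

theorem dist_shear (hinv : ∀ g x y, d (g * x) (g * y) = d x y) (x y : G) :
    d (y⁻¹ * x) 1 = d x y := by
  simpa using (hinv y (y⁻¹ * x) 1).symm

theorem GProd_mem_distBoundedEntourages (hinv : ∀ g x y, d (g * x) (g * y) = d x y)
    {A : Set G} (hA : IsDistBounded d A) : GProd A A ∈ distBoundedEntourages d := by
  obtain ⟨C, hC⟩ := hA
  refine ⟨C, ?_⟩
  rintro _ ⟨g, a, ha, b, hb, rfl⟩
  simpa [hinv] using hC a ha b hb

theorem isDistBounded_shearImage (hsymm : ∀ x y, d x y = d y x)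
    (htri : ∀ x y z, d x z ≤ d x y + d y z) (hinv : ∀ g x y, d (g * x) (g * y) = d x y)
    {E : Set (G × G)} (hE : E ∈ distBoundedEntourages d) :
    IsDistBounded d (shearImage E) := by
  obtain ⟨C, hC⟩ := hE
  have hone : ∀ x ∈ shearImage E, d x 1 ≤ C := by
    rintro _ ⟨p, hp, rfl⟩
    exact (dist_shear hinv p.1 p.2).trans_le (hC p hp)
  refine ⟨C + C, fun x hx y hy => ?_⟩
  calc d x y ≤ d x 1 + d 1 y := htri x 1 y
    _ = d x 1 + d y 1 := by rw [hsymm 1 y]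
    _ ≤ C + C := add_le_add (hone x hx) (hone y hy)

end LeftInvariant

section Compact

variable {G : Type*} [Group G] [TopologicalSpace G] [IsTopologicalGroup G]

theorem isCompact_closure_of_prod_subset_GProd {A K : Set G} (hK : IsCompact K)
    (hA : A ×ˢ A ⊆ GProd K K) : IsCompact (closure A) := by
  rcases A.eq_empty_or_nonempty with rfl | ⟨a, ha⟩
  · simp
  have hsub : A ⊆ a • (K⁻¹ * K) := by
    intro x hx
    have hxa : a⁻¹ * x ∈ K⁻¹ * K :=
      shearImage_GProd_subset K K ⟨(x, a), hA ⟨hx, ha⟩, rfl⟩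
    exact ⟨a⁻¹ * x, hxa, by simp⟩
  exact ((hK.inv.mul hK).smul a).closure_of_subset hsub

variable {d : G → G → ℝ}

theorem EF_isCompact_subset_distBoundedEntourages_iff
    (hinv : ∀ g x y, d (g * x) (g * y) = d x y) :
    EF {K : Set G | IsCompact K} ⊆ distBoundedEntourages d ↔
      ∀ A : Set G, IsCompact (closure A) → IsDistBounded d A := by
  refine ⟨fun h A hA => ?_, fun h E ⟨K, hK, hEK⟩ => ?_⟩
  · refine isDistBounded_of_prod_mem_distBoundedEntourages (h ⟨closure A, hA, ?_⟩)
    exact (prod_subset_GProd A A).trans (GProd_mono subset_closure subset_closure)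
  · obtain ⟨C, hC⟩ := GProd_mem_distBoundedEntourages hinv (h K hK.closure)
    exact ⟨C, fun p hp => hC p (hEK hp)⟩

theorem distBoundedEntourages_subset_EF_isCompact_iff (hsymm : ∀ x y, d x y = d y x)
    (htri : ∀ x y z, d x z ≤ d x y + d y z) (hinv : ∀ g x y, d (g * x) (g * y) = d x y) :
    distBoundedEntourages d ⊆ EF {K : Set G | IsCompact K} ↔
      ∀ A : Set G, IsDistBounded d A → IsCompact (closure A) := by
  refine ⟨fun h A hA => ?_, fun h E hE => ?_⟩
  · obtain ⟨K, hK, hAK⟩ := h hA.prod_mem_distBoundedEntourages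
    exact isCompact_closure_of_prod_subset_GProd hK hAK
  · let K := closure (shearImage E) ∪ {1}
    have hK : IsCompact K :=
      (h _ (isDistBounded_shearImage hsymm htri hinv hE)).union isCompact_singleton
    refine ⟨K, hK, (subset_GProd_shearImage_one E).trans (GProd_mono ?_ subset_union_right)⟩
    exact subset_closure.trans subset_union_left

end Compact

theorem stmt_5_general {G : Type*} [Group G] [TopologicalSpace G] [IsTopologicalGroup G]
    (d : G → G → ℝ) (hsymm : ∀ x y, d x y = d y x)
    (htri : ∀ x y z, d x z ≤ d x y + d y z)
    (hinv : ∀ g x y, d (g * x) (g * y) = d x y) :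
    EF {K : Set G | IsCompact K} = {E : Set (G × G) | ∃ C : ℝ, ∀ p ∈ E, d p.1 p.2 ≤ C} ↔
      ((∀ A : Set G, IsCompact (closure A) → ∃ C : ℝ, ∀ x ∈ A, ∀ y ∈ A, d x y ≤ C) ∧
       (∀ A : Set G, (∃ C : ℝ, ∀ x ∈ A, ∀ y ∈ A, d x y ≤ C) → IsCompact (closure A))) :=
  Subset.antisymm_iff.trans <| and_congr (EF_isCompact_subset_distBoundedEntourages_iff hinv)
    (distBoundedEntourages_subset_EF_isCompact_iff hsymm htri hinv)

theorem stmt_5 {G : Type*} [Group G] [TopologicalSpace G] [IsTopologicalGroup G] [T2Space G]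
    (d : G → G → ℝ) (hrefl : ∀ x, d x x = 0) (hsymm : ∀ x y, d x y = d y x)
    (htri : ∀ x y z, d x z ≤ d x y + d y z)
    (hinv : ∀ g x y, d (g * x) (g * y) = d x y) :
    EF {K : Set G | IsCompact K} = {E : Set (G × G) | ∃ C : ℝ, ∀ p ∈ E, d p.1 p.2 ≤ C} ↔
      ((∀ A : Set G, IsCompact (closure A) → ∃ C : ℝ, ∀ x ∈ A, ∀ y ∈ A, d x y ≤ C) ∧
       (∀ A : Set G, (∃ C : ℝ, ∀ x ∈ A, ∀ y ∈ A, d x y ≤ C) → IsCompact (closure A))) :=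
  stmt_5_general d hsymm htri hinv
end

section
/- Let G be a locally compact Hausdorff topological group with a generating set Σ ⊆ G such that Σ ∪ {1} ∪ Σ^{-1} is compact. Then the group-compact coarse structure on G coincides with the bounded coarse structure associated to the word metric d_Σ. -/
open Set Pointwise

/-!
Put `T = S ∪ {1} ∪ S⁻¹`. Since `S` generates `G`, the compact (hence closed) sets `T ^ n`
exhaust `G`, so by Baire's theorem some `T ^ m` has interior; translating it gives a
neighbourhood `U` of `1` inside a power of `T`. A compact `K` is covered by finitely many
translates `g • U`, each `g` lying in some power of `T`, hence `K ⊆ T ^ n` for one `n`.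
Finally `(x, y) ∈ G(K × K)` exactly when `y⁻¹ x ∈ K⁻¹ K`, so both coarse structures are
described by the shear map `(x, y) ↦ y⁻¹ x`.
-/

theorem mem_GProd_iff {G : Type*} [Group G] {A B : Set G} {p : G × G} :
    p ∈ GProd A B ↔ p.2⁻¹ * p.1 ∈ B⁻¹ * A := by
  constructor
  · rintro ⟨g, a, ha, b, hb, rfl⟩
    exact ⟨b⁻¹, inv_mem_inv.2 hb, a, ha, by group⟩
  · rintro ⟨c, hc, a, ha, hca⟩
    refine ⟨p.2 * c, a, ha, c⁻¹, hc, ?_⟩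
    simp only at hca
    rw [mul_assoc, hca, mul_inv_cancel_left, mul_inv_cancel_right]

theorem Subgroup.exists_mem_pow_of_mem_closure {G : Type*} [Group G] {S T : Set G}
    (hS : S ⊆ T) (hS_inv : S⁻¹ ⊆ T) {x : G} (hx : x ∈ Subgroup.closure S) :
    ∃ n : ℕ, x ∈ T ^ n := by
  induction hx using Subgroup.closure_induction'' with
  | mem x hx => exact ⟨1, by simpa using hS hx⟩
  | inv_mem x hx => exact ⟨1, by simpa using hS_inv (inv_mem_inv.2 hx)⟩
  | one => exact ⟨0, by simp⟩
  | mul x y _ _ hx hy =>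
    obtain ⟨m, hxm⟩ := hx
    obtain ⟨n, hyn⟩ := hy
    exact ⟨m + n, by rw [pow_add]; exact mul_mem_mul hxm hyn⟩

theorem IsCompact.pow {M : Type*} [Monoid M] [TopologicalSpace M] [ContinuousMul M] {s : Set M}
    (hs : IsCompact s) : ∀ n : ℕ, IsCompact (s ^ n)
  | 0 => by rw [pow_zero]; exact isCompact_singleton
  | n + 1 => by rw [pow_succ]; exact (hs.pow n).mul hs

section Baire

variable {G : Type*} [Group G] [TopologicalSpace G] [ContinuousMul G] [T2Space G] [BaireSpace G]
  {T : Set G}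

theorem exists_isOpen_one_mem_subset_pow (hT : IsCompact T) (hcover : ∀ x : G, ∃ n, x ∈ T ^ n) :
    ∃ U : Set G, IsOpen U ∧ (1 : G) ∈ U ∧ ∃ N : ℕ, U ⊆ T ^ N := by
  obtain ⟨m, x, hx⟩ : ∃ m, (interior (T ^ m)).Nonempty :=
    nonempty_interior_of_iUnion_of_closed (fun n => (hT.pow n).isClosed)
      (iUnion_eq_univ_iff.2 hcover)
  obtain ⟨k, hxk⟩ := hcover x⁻¹
  refine ⟨x⁻¹ • interior (T ^ m), isOpen_interior.smul _, ⟨x, hx, inv_mul_cancel x⟩, k + m, ?_⟩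
  rintro _ ⟨y, hy, rfl⟩
  rw [pow_add]
  exact mul_mem_mul hxk (interior_subset hy)

theorem exists_subset_pow_of_isCompact (hT : IsCompact T) (hT_one : (1 : G) ∈ T)
    (hcover : ∀ x : G, ∃ n, x ∈ T ^ n) {K : Set G} (hK : IsCompact K) :
    ∃ n : ℕ, K ⊆ T ^ n := by
  obtain ⟨U, hU, hU_one, N, hUN⟩ := exists_isOpen_one_mem_subset_pow hT hcover
  obtain ⟨t, ht⟩ := hK.elim_finite_subcover (fun g : G => g • U) (fun g => hU.smul g)
    fun k _ => mem_iUnion.2 ⟨k, 1, hU_one, mul_one k⟩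
  choose f hf using hcover
  refine ⟨t.sup f + N, fun k hk => ?_⟩
  obtain ⟨g, hgt, u, hu, rfl⟩ := by simpa using ht hk
  rw [pow_add]
  exact mul_mem_mul (pow_subset_pow_right hT_one (Finset.le_sup hgt) (hf g)) (hUN hu)

end Baire

theorem stmt_6 {G : Type*} [Group G] [TopologicalSpace G] [IsTopologicalGroup G] [T2Space G]
    [LocallyCompactSpace G] (S : Set G) (hgen : Subgroup.closure S = ⊤)
    (hcpt : IsCompact (S ∪ {1} ∪ S⁻¹)) :
    EF {K : Set G | IsCompact K} =
      {E : Set (G × G) | ∃ n : ℕ, ∀ p ∈ E, p.2⁻¹ * p.1 ∈ (S ∪ {1} ∪ S⁻¹) ^ n} := by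
  set T := S ∪ {1} ∪ S⁻¹
  have hT_one : (1 : G) ∈ T := by simp [T]
  have hcover (x : G) : ∃ n, x ∈ T ^ n :=
    Subgroup.exists_mem_pow_of_mem_closure (subset_union_left.trans subset_union_left)
      subset_union_right (hgen ▸ Subgroup.mem_top x)
  ext E
  constructor
  · rintro ⟨K, hK, hEK⟩
    obtain ⟨n, hn⟩ := exists_subset_pow_of_isCompact hcpt hT_one hcover (hK.inv.mul hK)
    exact ⟨n, fun p hp => hn (mem_GProd_iff.1 (hEK hp))⟩
  · rintro ⟨n, hn⟩
    have h_one : (1 : G) ∈ (T ^ n)⁻¹ := by simpa using one_mem_pow hT_one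
    exact ⟨T ^ n, hcpt.pow n, fun p hp => mem_GProd_iff.2 (subset_mul_right _ h_one (hn p hp))⟩
end

section
/- There is no left invariant pseudo-metric d on the additive topological group Z[1/2] (dyadic rationals with the subspace topology from ℝ) such that the bounded coarse structure associated to d coincides with the group-compact coarse structure on Z[1/2]. -/
open Set Pointwise

/-- Additive version of `G(A × B)`: the saturation of `A × B` under the diagonal
left translation action of `G`. -/
def AddGProd {G : Type*} [AddGroup G] (A B : Set G) : Set (G × G) :=
  {p | ∃ g : G, ∃ a ∈ A, ∃ b ∈ B, p = (g + a, g + b)}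

/-- The coarse structure associated to a family `F` of subsets of an additive group. -/
def AddEF {G : Type*} [AddGroup G] (F : Set (Set G)) : Set (Set (G × G)) :=
  {E | ∃ A ∈ F, E ⊆ AddGProd A A}

/-- The group `ℤ[1/2]` of dyadic rationals, as an additive subgroup of `ℝ`
(whose coercion to a type carries the subspace topology from `ℝ`). -/
def Zhalf : AddSubgroup ℝ where
  carrier := {x : ℝ | ∃ m : ℤ, ∃ n : ℕ, x = m / 2 ^ n}
  zero_mem' := ⟨0, 0, by norm_num⟩
  add_mem' := by
    rintro a b ⟨m, n, rfl⟩ ⟨m', n', rfl⟩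
    refine ⟨m * 2 ^ n' + m' * 2 ^ n, n + n', ?_⟩
    have h1 : (2 : ℝ) ^ n ≠ 0 := by positivity
    have h2 : (2 : ℝ) ^ n' ≠ 0 := by positivity
    push_cast
    rw [div_add_div _ _ h1 h2, div_eq_div_iff (by positivity) (by positivity)]
    ring
  neg_mem' := by
    rintro a ⟨m, n, rfl⟩
    exact ⟨-m, n, by push_cast; ring⟩

/-!
If the bounded and the group-compact coarse structures of `d` agreed, every ball `d 0 x ≤ n`
would lie in a compact set `K n`, and every compact set would be bounded, hence contained in
some `K n`. But `ℤ[1/2]` is first countable, and a compact neighbourhood in it would be a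
countable closed subset of `ℝ` containing an interval, as `ℤ[1/2]` is dense. So we can choose
`x n ∉ K n` with `x n → 0`, and the compact set `{0} ∪ {x n}` lies in no `K n`.
-/

open Filter Topology

def boundedCoarseStructure {G : Type*} (d : G → G → ℝ) : Set (Set (G × G)) :=
  {E | ∃ C : ℝ, ∀ p ∈ E, d p.1 p.2 ≤ C}

section CoarseStructures

variable {G : Type*} [AddGroup G] [TopologicalSpace G] (d : G → G → ℝ)

theorem exists_isCompact_superset_of_boundedCoarseStructure_subset [IsTopologicalAddGroup G]
    (h : boundedCoarseStructure d ⊆ AddEF {K : Set G | IsCompact K}) (r : ℝ) :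
    ∃ K : Set G, IsCompact K ∧ {x | d 0 x ≤ r} ⊆ K := by
  obtain ⟨A, hA, hsub⟩ := h (show ({0} ×ˢ {x | d 0 x ≤ r} : Set (G × G)) ∈ _ from
    ⟨r, fun p ⟨hp1, hp2⟩ => (mem_singleton_iff.mp hp1) ▸ hp2⟩)
  refine ⟨(fun p : G × G => -p.1 + p.2) '' (A ×ˢ A),
    (hA.prod hA).image (by fun_prop), fun x hx => ?_⟩
  obtain ⟨g, a, ha, b, hb, hp⟩ := hsub (show ((0 : G), x) ∈ _ from ⟨rfl, hx⟩)
  obtain ⟨h0, rfl⟩ := Prod.ext_iff.mp hp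
  refine ⟨(a, b), ⟨ha, hb⟩, ?_⟩
  rw [eq_neg_of_add_eq_zero_left h0.symm]

theorem bddAbove_image_of_subset_boundedCoarseStructure
    (h : AddEF {K : Set G | IsCompact K} ⊆ boundedCoarseStructure d) {S : Set G}
    (hS : IsCompact S) : BddAbove (d 0 '' S) := by
  obtain ⟨C, hC⟩ := h ⟨insert 0 S, hS.insert 0, subset_rfl⟩
  refine ⟨C, forall_mem_image.2 fun x hx => ?_⟩
  simpa using hC (0, x) ⟨0, 0, mem_insert _ _, x, mem_insert_of_mem _ hx, by simp⟩

end CoarseStructures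

theorem exists_isCompact_forall_not_subset {X : Type*} [TopologicalSpace X]
    [FirstCountableTopology X] {a : X} {K : ℕ → Set X} (hK : ∀ n, K n ∉ 𝓝 a) :
    ∃ S : Set X, IsCompact S ∧ ∀ n, ¬ S ⊆ K n := by
  obtain ⟨U, hU⟩ := (𝓝 a).exists_antitone_basis
  have hUK : ∀ n, ∃ x ∈ U n, x ∉ K n := fun n =>
    not_subset.mp fun hsub => hK n (mem_of_superset (hU.mem n) hsub)
  choose x hxU hxK using hUK
  exact ⟨insert a (range x), (hU.tendsto hxU).isCompact_insert_range,
    fun n hsub => hxK n (hsub (mem_insert_of_mem _ ⟨n, rfl⟩))⟩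

theorem interior_eq_empty_of_isCompact_of_dense_of_countable {E : Type*} [AddCommGroup E]
    [Module ℝ E] [Nontrivial E] [TopologicalSpace E] [ContinuousAdd E] [ContinuousSMul ℝ E]
    [T2Space E] {S : Set E} (hd : Dense S) (hc : S.Countable) {K : Set S}
    (hK : IsCompact K) : interior K = ∅ :=
  hd.isDenseInducing_val.interior_compact_eq_empty
    (by simpa using hc.dense_compl ℝ) hK

namespace Zhalf

theorem countable : (Zhalf : Set ℝ).Countable := by
  refine (countable_range fun p : ℤ × ℕ => (p.1 : ℝ) / 2 ^ p.2).mono ?_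
  rintro _ ⟨m, n, rfl⟩
  exact ⟨(m, n), rfl⟩

theorem dense : Dense (Zhalf : Set ℝ) := by
  refine AddSubgroup.dense_of_not_isolated_zero _ fun ε hε => ?_
  obtain ⟨n, hn⟩ := exists_pow_lt_of_lt_one hε (by norm_num : (1 / 2 : ℝ) < 1)
  exact ⟨(1 / 2) ^ n, ⟨1, n, by simp⟩, by positivity, hn⟩

theorem notMem_nhds_of_isCompact {K : Set Zhalf} (hK : IsCompact K) (x : Zhalf) : K ∉ 𝓝 x :=
  fun hx => eq_empty_iff_forall_notMem.mp
    (interior_eq_empty_of_isCompact_of_dense_of_countable dense countable hK) x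
    (mem_interior_iff_mem_nhds.mpr hx)

end Zhalf

/-- There is no left invariant pseudo-metric on the topological group `ℤ[1/2]` whose
bounded coarse structure coincides with the group-compact coarse structure. -/
theorem stmt_7 :
    ¬ ∃ d : Zhalf → Zhalf → ℝ,
      (∀ x, d x x = 0) ∧ (∀ x y, d x y = d y x) ∧
      (∀ x y z, d x z ≤ d x y + d y z) ∧
      (∀ g x y, d (g + x) (g + y) = d x y) ∧
      ({E : Set (Zhalf × Zhalf) | ∃ C : ℝ, ∀ p ∈ E, d p.1 p.2 ≤ C} =
        AddEF {K : Set Zhalf | IsCompact K}) := by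
  rintro ⟨d, -, -, -, -, hcoarse⟩
  choose K hK hball using exists_isCompact_superset_of_boundedCoarseStructure_subset d hcoarse.le
  obtain ⟨S, hS, hSK⟩ := exists_isCompact_forall_not_subset (K := fun n : ℕ => K n)
    fun n => Zhalf.notMem_nhds_of_isCompact (hK n) 0
  obtain ⟨C, hC⟩ := bddAbove_image_of_subset_boundedCoarseStructure d hcoarse.ge hS
  obtain ⟨m, hm⟩ := exists_nat_ge C
  exact hSK m fun x hx => hball m ((hC (mem_image_of_mem _ hx)).trans hm)
end

section
/- Let G be a group with generating family F and let H ⊆ G be a subgroup. If there exists B ∈ F with HB = G, then the inclusion map i : (H, E_{F|_H}) → (G, E_F) is a coarse equivalence. -/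
/-! An entourage of `E_F` is, up to the diagonal action, a set of pairs `(x, y)` with `y⁻¹ x`
in a member of `F`. Since `HB = G`, every `g` factors as `g = ψ(g) b` with `ψ(g) ∈ H` and
`b ∈ B`; then `ψ` moves points by elements of `B`, which makes it a coarse inverse of the
inclusion: `ψ(y)⁻¹ ψ(x) ∈ B (y⁻¹ x) B⁻¹`. -/

open Set Pointwise

section CoarseGroup

variable {G : Type*} [Group G]

lemma inv_mul_mem_of_mem_GProd {A : Set G} {p : G × G} (hp : p ∈ GProd A A) :
    p.2⁻¹ * p.1 ∈ A⁻¹ * A := by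
  obtain ⟨g, a, ha, b, hb, rfl⟩ := hp
  exact ⟨b⁻¹, inv_mem_inv.mpr hb, a, ha, by group⟩

lemma mem_EF_of_one_mem_of_inv_mul_mem {F : Set (Set G)} {D : Set G} {E : Set (G × G)}
    (hD : D ∈ F) (hone : 1 ∈ D) (hE : ∀ p ∈ E, p.2⁻¹ * p.1 ∈ D) : E ∈ EF F :=
  ⟨D, hD, fun p hp => ⟨p.2, p.2⁻¹ * p.1, hE p hp, 1, hone, by simp⟩⟩

namespace IsGenFamily

variable {F : Set (Set G)}

lemma exists_superset_one_mem (hF : IsGenFamily F) {D : Set G} (hD : D ∈ F) :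
    ∃ D' ∈ F, D ⊆ D' ∧ (1 : G) ∈ D' := by
  obtain ⟨A, hA, a, ha⟩ := hF.exists_nonempty
  refine ⟨D ∪ A⁻¹ * A, hF.union_mem _ hD _ (hF.mul_mem _ (hF.inv_mem _ hA) _ hA),
    subset_union_left, Or.inr ⟨a⁻¹, inv_mem_inv.mpr ha, a, ha, inv_mul_cancel a⟩⟩

lemma mem_EF_of_inv_mul_mem (hF : IsGenFamily F) {D : Set G} {E : Set (G × G)} (hD : D ∈ F)
    (hE : ∀ p ∈ E, p.2⁻¹ * p.1 ∈ D) : E ∈ EF F := by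
  obtain ⟨D', hD', hDD', hone⟩ := hF.exists_superset_one_mem hD
  exact mem_EF_of_one_mem_of_inv_mul_mem hD' hone fun p hp => hDD' (hE p hp)

lemma mem_EF_restrictFamily_of_inv_mul_mem (hF : IsGenFamily F) (H : Subgroup G) {D : Set G}
    {E : Set (H × H)} (hD : D ∈ F) (hE : ∀ p ∈ E, (p.2 : G)⁻¹ * p.1 ∈ D) :
    E ∈ EF (restrictFamily F H) := by
  obtain ⟨D', hD', hDD', hone⟩ := hF.exists_superset_one_mem hD
  refine mem_EF_of_one_mem_of_inv_mul_mem ⟨D', hD', rfl⟩ hone fun p hp => ?_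
  simpa using hDD' (hE p hp)

end IsGenFamily

lemma coarselyUniform_subtype_val (F : Set (Set G)) (H : Subgroup G) :
    CoarselyUniform (EF (restrictFamily F H)) (EF F) (Subtype.val : H → G) := by
  rintro E ⟨_, ⟨A, hA, rfl⟩, hEA⟩
  refine ⟨A, hA, ?_⟩
  rintro _ ⟨q, hq, rfl⟩
  obtain ⟨g, a, ha, b, hb, rfl⟩ := hEA hq
  exact ⟨g, a, ha, b, hb, rfl⟩

lemma exists_inv_mul_mem_of_mul_eq_univ {H : Subgroup G} {B : Set G}
    (hHB : (H : Set G) * B = univ) (g : G) : ∃ h : H, (h : G)⁻¹ * g ∈ B := by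
  obtain ⟨h, hh, b, hb, hhb⟩ : g ∈ (H : Set G) * B := hHB ▸ mem_univ g
  exact ⟨⟨h, hh⟩, by simpa [← hhb] using hb⟩

lemma coarselyUniform_of_inv_mul_mem {F : Set (Set G)} (hF : IsGenFamily F) {H : Subgroup G}
    {B : Set G} (hB : B ∈ F) {ψ : G → H} (hψ : ∀ g, (ψ g : G)⁻¹ * g ∈ B) :
    CoarselyUniform (EF F) (EF (restrictFamily F H)) ψ := by
  rintro E ⟨A, hA, hEA⟩
  have hD : B * (A⁻¹ * A) * B⁻¹ ∈ F :=
    hF.mul_mem _ (hF.mul_mem _ hB _ (hF.mul_mem _ (hF.inv_mem _ hA) _ hA)) _ (hF.inv_mem _ hB)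
  refine hF.mem_EF_restrictFamily_of_inv_mul_mem H hD ?_
  rintro _ ⟨⟨x, y⟩, hxy, rfl⟩
  have hdecomp :
      (ψ y : G)⁻¹ * ψ x = ((ψ y : G)⁻¹ * y) * (y⁻¹ * x) * ((ψ x : G)⁻¹ * x)⁻¹ := by
    group
  rw [Prod.map_fst, Prod.map_snd, hdecomp]
  exact mul_mem_mul (mul_mem_mul (hψ y) (inv_mul_mem_of_mem_GProd (hEA hxy)))
    (inv_mem_inv.mpr (hψ x))

end CoarseGroup

theorem stmt_11 {G : Type*} [Group G] (F : Set (Set G)) (hF : IsGenFamily F)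
    (H : Subgroup G) (B : Set G) (hB : B ∈ F) (hHB : (H : Set G) * B = Set.univ) :
    CoarselyUniform (EF (restrictFamily F H)) (EF F) (Subtype.val : H → G) ∧
    ∃ ψ : G → H, CoarselyUniform (EF F) (EF (restrictFamily F H)) ψ ∧
      Close (EF (restrictFamily F H)) (ψ ∘ Subtype.val) id ∧
      Close (EF F) (Subtype.val ∘ ψ) id := by
  choose ψ hψ using exists_inv_mul_mem_of_mul_eq_univ hHB
  have hψ' : ∀ g, g⁻¹ * ψ g ∈ B⁻¹ := fun g => by simpa using inv_mem_inv.mpr (hψ g)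
  refine ⟨coarselyUniform_subtype_val F H, ψ, coarselyUniform_of_inv_mul_mem hF hB hψ, ?_, ?_⟩
  · refine hF.mem_EF_restrictFamily_of_inv_mul_mem H (hF.inv_mem B hB) ?_
    rintro _ ⟨h, rfl⟩
    exact hψ' h
  · refine hF.mem_EF_of_inv_mul_mem (hF.inv_mem B hB) ?_
    rintro _ ⟨g, rfl⟩
    exact hψ' g
end

section
/- Let G be a group with generating family F such that (G, E_F) is connected, and suppose G is generated as an abstract group by a set S ∈ F̂. Then asdim(G, E_F) = 0 if and only if G ∈ F. -/
open Set Pointwise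

theorem gProd_univ {G : Type*} [Group G] : GProd (univ : Set G) univ = univ :=
  eq_univ_of_forall fun p => ⟨1, p.1, mem_univ _, p.2, mem_univ _, by simp⟩

theorem inv_mul_mem_of_mem_gProd {G : Type*} [Group G] {A B : Set G} {x y : G}
    (h : (x, y) ∈ GProd A B) : y⁻¹ * x ∈ B⁻¹ * A := by
  obtain ⟨g, a, ha, b, hb, hxy⟩ := h
  obtain ⟨rfl, rfl⟩ := Prod.mk.inj hxy
  simpa [mul_assoc] using mul_mem_mul (inv_mem_inv.mpr hb) ha

theorem univ_mem_EF_iff {G : Type*} [Group G] {F : Set (Set G)} (hF : IsGenFamily F) :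
    univ ∈ EF F ↔ univ ∈ F := by
  refine ⟨fun ⟨A, hA, hsub⟩ => ?_, fun h => ⟨univ, h, gProd_univ.ge⟩⟩
  have hAA : A⁻¹ * A = univ := eq_univ_of_forall fun x => by
    simpa using inv_mul_mem_of_mem_gProd (hsub (mem_univ (x, 1)))
  exact hAA ▸ hF.mul_mem _ (hF.inv_mem _ hA) _ hA

theorem UnifBounded.univ_mem {X : Type*} {E : Set (Set (X × X))} {U : Set (Set X)}
    (hU : UnifBounded E U) (huniv : univ ∈ U) : univ ∈ E := by
  obtain ⟨M, hM, hUM⟩ := hU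
  exact univ_subset_iff.mp (by simpa using hUM univ huniv) ▸ hM

theorem LDisjoint.mem_of_mem {X : Type*} {L : Set (X × X)} {U : Set (Set X)}
    (hU : LDisjoint L U) (hcover : ⋃₀ U = univ) {A : Set X} (hA : A ∈ U) {x y : X}
    (hx : x ∈ A) (hyx : (y, x) ∈ L) : y ∈ A := by
  obtain ⟨B, hB, hy⟩ := hcover.ge (mem_univ y)
  obtain rfl | hBA := eq_or_ne B A
  · exact hy
  · exact absurd hyx (hU B hB A hA hBA y hy x hx)

theorem lDisjoint_singleton {X : Type*} (L : Set (X × X)) (A : Set X) : LDisjoint L {A} :=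
  fun _ hA _ hB hne => absurd (hA.trans hB.symm) hne

theorem asdimLE_zero_iff {X : Type*} {E : Set (Set (X × X))} :
    asdimLE E 0 ↔
      ∀ L ∈ E, ∃ U : Set (Set X), ⋃₀ U = univ ∧ LDisjoint L U ∧ UnifBounded E U := by
  refine forall₂_congr fun L _ =>
    ⟨fun ⟨U, hcover, hdisj, hbdd⟩ => ?_, fun ⟨U, h⟩ => ?_⟩
  · exact ⟨U 0, (iSup_unique (ι := Fin 1) _).symm.trans hcover, hdisj 0,
      iSup_unique (ι := Fin 1) U ▸ hbdd⟩
  · exact ⟨fun _ => U, (iUnion_const (ι := Fin 1) _).trans h.1, fun _ => h.2.1,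
      (iUnion_const (ι := Fin 1) U).symm ▸ h.2.2⟩

theorem asdimLE_zero_of_univ_mem {X : Type*} {E : Set (Set (X × X))} (h : univ ∈ E) :
    asdimLE E 0 :=
  asdimLE_zero_iff.mpr fun L _ => ⟨{univ}, sUnion_singleton _, lDisjoint_singleton L _,
    univ, h, fun _ _ => subset_univ _⟩

theorem eq_univ_of_mul_mem_of_closure_eq_top {G : Type*} [Group G] {S A : Set G}
    (hgen : Subgroup.closure S = ⊤) (hA : A.Nonempty)
    (hmul : ∀ x ∈ A, ∀ s ∈ S, x * s ∈ A ∧ x * s⁻¹ ∈ A) : A = univ := by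
  obtain ⟨a, ha⟩ := hA
  have hmul_closure : ∀ g ∈ Subgroup.closure S, ∀ x ∈ A, x * g ∈ A := by
    intro g hg
    induction hg using Subgroup.closure_induction'' with
    | mem s hs => exact fun x hx => (hmul x hx s hs).1
    | inv_mem s hs => exact fun x hx => (hmul x hx s hs).2
    | one => simp
    | mul g h _ _ hg hh => exact fun x hx => mul_assoc x g h ▸ hh _ (hg x hx)
  exact eq_univ_of_forall fun g => by
    simpa using hmul_closure (a⁻¹ * g) (hgen ▸ Subgroup.mem_top _) a ha

/- Choosing `L = G(C × C)` with `1 ∈ C` and `S ∪ S⁻¹ ⊆ C`, the member of a `0`-dimensional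
`L`-disjoint cover containing a point is stable under right multiplication by `S ∪ S⁻¹`,
hence is all of `G`; uniform boundedness then puts `G × G` into `E_F`. -/
theorem univ_mem_of_asdimLE_zero {G : Type*} [Group G] {F : Set (Set G)} (hF : IsGenFamily F)
    {S : Set G} (hS : S ∈ hatF F) (hgen : Subgroup.closure S = ⊤) (h : asdimLE (EF F) 0) :
    univ ∈ F := by
  obtain ⟨B, hB, hSB⟩ := hS
  obtain ⟨A, hA, a, ha⟩ := hF.exists_nonempty
  set C : Set G := A⁻¹ * A ∪ (B ∪ B⁻¹)
  have hCF : C ∈ F := hF.union_mem _ (hF.mul_mem _ (hF.inv_mem _ hA) _ hA) _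
    (hF.union_mem _ hB _ (hF.inv_mem _ hB))
  have h1C : (1 : G) ∈ C := Or.inl (by simpa using mul_mem_mul (inv_mem_inv.mpr ha) ha)
  obtain ⟨U, hcover, hdisj, hbdd⟩ := asdimLE_zero_iff.mp h _ ⟨C, hCF, subset_rfl⟩
  obtain ⟨A₀, hA₀, h1A₀⟩ := hcover.ge (mem_univ 1)
  have hmulC : ∀ x ∈ A₀, ∀ c ∈ C, x * c ∈ A₀ := fun x hx c hc =>
    hdisj.mem_of_mem hcover hA₀ hx ⟨x, c, hc, 1, h1C, by simp⟩
  have hA₀univ : A₀ = univ :=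
    eq_univ_of_mul_mem_of_closure_eq_top hgen ⟨1, h1A₀⟩ fun x hx s hs =>
      ⟨hmulC x hx s (Or.inr (Or.inl (hSB hs))),
        hmulC x hx s⁻¹ (Or.inr (Or.inr (inv_mem_inv.mpr (hSB hs))))⟩
  exact (univ_mem_EF_iff hF).mp (hbdd.univ_mem (hA₀univ ▸ hA₀))

theorem stmt_14_general {G : Type*} [Group G] (F : Set (Set G)) (hF : IsGenFamily F)
    (S : Set G) (hS : S ∈ hatF F)
    (hgen : Subgroup.closure S = ⊤) :
    asdimLE (EF F) 0 ↔ (Set.univ : Set G) ∈ F :=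
  ⟨univ_mem_of_asdimLE_zero hF hS hgen,
    fun h => asdimLE_zero_of_univ_mem ((univ_mem_EF_iff hF).mpr h)⟩

theorem stmt_14 {G : Type*} [Group G] (F : Set (Set G)) (hF : IsGenFamily F)
    (hconn : ConnectedCoarse (EF F)) (S : Set G) (hS : S ∈ hatF F)
    (hgen : Subgroup.closure S = ⊤) :
    asdimLE (EF F) 0 ↔ (Set.univ : Set G) ∈ F :=
  stmt_14_general F hF S hS hgen
end

section
/- Let G be a Hausdorff topological group with a compact set of generators. Then the asymptotic dimension of G with respect to the group-compact coarse structure is 0 if and only if G is compact. -/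
open Set Pointwise

/-!
If `asdim G = 0`, take the entourage `L = G((1 ∪ K) × (1 ∪ K))`, which relates `g` to `g k` and
to `g k⁻¹` for every `k ∈ K`. In an `L`-disjoint cover, the piece containing `1` is closed under
these moves, so it is all of `G` because `K` generates. Uniform boundedness then puts `G × G`
inside some `G(C × C)` with `C` compact, whence `G = C⁻¹ C` is compact. Conversely, if `G` is
compact then `G × G = G(G × G)` is an entourage and the one-piece cover `{G}` does the job.
-/


section Coarse

variable {X : Type*}

theorem LDisjoint.mem_of_mem_of_rel {L : Set (X × X)} {U : Set (Set X)} (hdisj : LDisjoint L U)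
    (hcover : ⋃₀ U = univ) {A : Set X} (hA : A ∈ U) {x y : X} (hx : x ∈ A) (hxy : (x, y) ∈ L) :
    y ∈ A := by
  obtain ⟨B, hB, hy⟩ : y ∈ ⋃₀ U := hcover ▸ mem_univ y
  by_contra hyA
  exact hdisj A hA B hB (fun hAB => hyA (hAB ▸ hy)) x hx y hy hxy

theorem asdimLE_zero_of_unifBounded_univ {E : Set (Set (X × X))} (h : UnifBounded E {univ}) : asdimLE E 0 := by
  intro L _
  refine ⟨fun _ => {univ}, by simp [iUnion_const], fun _ => ?_, by simpa using h⟩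
  intro A hA B hB hAB
  exact absurd ((mem_singleton_iff.1 hA).trans (mem_singleton_iff.1 hB).symm) hAB

end Coarse

section Group

variable {G : Type*} [Group G]

theorem mk_mul_mem_GProd {A B : Set G} (g : G) {a b : G} (ha : a ∈ A) (hb : b ∈ B) :
    (g * a, g * b) ∈ GProd A B :=
  ⟨g, a, ha, b, hb, rfl⟩

theorem inv_mul_mem_of_mem_GProd_s15 {A B : Set G} {x y : G} (h : (x, y) ∈ GProd A B) :
    y⁻¹ * x ∈ B⁻¹ * A := by
  obtain ⟨g, a, ha, b, hb, hxy⟩ := h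
  obtain ⟨rfl, rfl⟩ := Prod.mk.inj hxy
  exact ⟨b⁻¹, inv_mem_inv.2 hb, a, ha, by group⟩

theorem eq_univ_of_closure_eq_top {K A : Set G} (hgen : Subgroup.closure K = ⊤) (h1 : (1 : G) ∈ A)
    (hmul : ∀ a ∈ A, ∀ k ∈ K, a * k ∈ A) (hmul_inv : ∀ a ∈ A, ∀ k ∈ K, a * k⁻¹ ∈ A) :
    A = univ :=
  eq_univ_of_forall fun g =>
    Subgroup.closure_induction_right (p := fun x _ => x ∈ A) h1
      (fun x _ k hk hx => hmul x hx k hk) (fun x _ k hk hx => hmul_inv x hx k hk)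
      (hgen ▸ Subgroup.mem_top g)

theorem unifBounded_univ_of_asdimLE_zero {E : Set (Set (G × G))} {K : Set G}
    (hgen : Subgroup.closure K = ⊤) (hL : GProd (insert 1 K) (insert 1 K) ∈ E)
    (h : asdimLE E 0) : UnifBounded E {univ} := by
  obtain ⟨U, hcover, hdisj, M, hM, hbd⟩ := h _ hL
  have hcover₀ : ⋃₀ U 0 = univ := by
    rw [← hcover]
    exact (subset_iUnion (fun i => ⋃₀ U i) 0).antisymm
      (iUnion_subset fun i : Fin 1 => Fin.fin_one_eq_zero i ▸ subset_rfl)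
  obtain ⟨A, hA, h1A⟩ : (1 : G) ∈ ⋃₀ U 0 := hcover₀ ▸ mem_univ 1
  have hAuniv : A = univ := by
    refine eq_univ_of_closure_eq_top hgen h1A
      (fun a ha k hk => (hdisj 0).mem_of_mem_of_rel hcover₀ hA ha ?_)
      (fun a ha k hk => (hdisj 0).mem_of_mem_of_rel hcover₀ hA ha ?_)
    · simpa using mk_mul_mem_GProd a (mem_insert 1 K) (mem_insert_of_mem 1 hk)
    · simpa using mk_mul_mem_GProd (a * k⁻¹) (mem_insert_of_mem 1 hk) (mem_insert 1 K)
  refine ⟨M, hM, fun B hB => ?_⟩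
  rw [mem_singleton_iff.1 hB, ← hAuniv]
  exact hbd A (mem_iUnion.2 ⟨0, hA⟩)

variable [TopologicalSpace G] [ContinuousMul G] [ContinuousInv G]

theorem unifBounded_univ_EF_isCompact_iff :
    UnifBounded (EF {C : Set G | IsCompact C}) {univ} ↔ IsCompact (univ : Set G) := by
  constructor
  · rintro ⟨M, ⟨C, hC, hMC⟩, hbd⟩
    refine (hC.inv.mul hC).of_isClosed_subset isClosed_univ fun x _ => ?_
    simpa using inv_mul_mem_of_mem_GProd_s15 (hMC (hbd univ rfl ⟨mem_univ x, mem_univ 1⟩))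
  · intro hG
    refine ⟨univ ×ˢ univ, ⟨univ, hG, fun p _ => ?_⟩,
      fun A hA => mem_singleton_iff.1 hA ▸ subset_rfl⟩
    simpa using mk_mul_mem_GProd p.1 (mem_univ 1) (mem_univ (p.1⁻¹ * p.2))

end Group

theorem stmt_15_general {G : Type*} [Group G] [TopologicalSpace G] [IsTopologicalGroup G]
    (K : Set G) (hK : IsCompact K) (hgen : Subgroup.closure K = ⊤) :
    asdimLE (EF {C : Set G | IsCompact C}) 0 ↔ IsCompact (Set.univ : Set G) := by
  rw [← unifBounded_univ_EF_isCompact_iff]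
  exact ⟨unifBounded_univ_of_asdimLE_zero hgen ⟨_, hK.insert 1, subset_rfl⟩,
    asdimLE_zero_of_unifBounded_univ⟩

theorem stmt_15 {G : Type*} [Group G] [TopologicalSpace G] [IsTopologicalGroup G] [T2Space G]
    (K : Set G) (hK : IsCompact K) (hgen : Subgroup.closure K = ⊤) :
    asdimLE (EF {C : Set G | IsCompact C}) 0 ↔ IsCompact (Set.univ : Set G) :=
  stmt_15_general K hK hgen
end

section
/- Let 1 → N → G → Q → 1 be an extension of groups with i : N → G the inclusion and π : G → Q the quotient map, and let F be a generating family on G with (G, E_F) connected. If asdim(N, E_{F|_N}) ≤ n and asdim(Q, E_{π(F)}) ≤ k, then asdim(G, E_F) ≤ (n+1)(k+1) − 1. -/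
open Set Pointwise

/-!
Measure closeness in `G` by `y⁻¹ * x`. Given a scale `A`, cover `G ⧸ N` at scale `A` by `k + 1`
families whose pieces have quotients in the image of some `D ∈ F`, and cover `N` at the larger
scale `D * A * D⁻¹` by `n + 1` families with pieces bounded by some `C`. Over each quotient piece
`P` fix a base point `g_P`; every `x` over `P` is `g_P * ν * d` with `ν ∈ N`, `d ∈ D`, and the
sets `g_P * S * D` for the pieces `S` of `N` form `(n + 1)(k + 1)` families. They are bounded by
`D⁻¹ * C * D`, and `A`-close points over the same `P` have `D * A * D⁻¹`-close `N`-coordinates.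
-/

section

variable {G : Type*} [Group G]

def shearSet (K : Set G) : Set (G × G) :=
  (fun p : G × G => p.2⁻¹ * p.1) ⁻¹' K

@[simp]
lemma mem_shearSet {K : Set G} {p : G × G} : p ∈ shearSet K ↔ p.2⁻¹ * p.1 ∈ K := Iff.rfl

lemma shearSet_mono {K K' : Set G} (h : K ⊆ K') : shearSet K ⊆ shearSet K' :=
  Set.preimage_mono h

lemma GProd_eq_shearSet (A B : Set G) : GProd A B = shearSet (B⁻¹ * A) := by
  ext p
  constructor
  · rintro ⟨g, a, ha, b, hb, rfl⟩
    exact ⟨b⁻¹, inv_mem_inv.mpr hb, a, ha, by group⟩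
  · rintro ⟨c, hc, a, ha, hca : c * a = p.2⁻¹ * p.1⟩
    refine ⟨p.2 * c, a, ha, c⁻¹, hc, ?_⟩
    rw [mul_assoc, hca]
    simp

lemma shearSet_mem_EF {F : Set (Set G)} {K : Set G} (hK : K ∈ F) (h1 : (1 : G) ∈ K) :
    shearSet K ∈ EF F :=
  ⟨K, hK, GProd_eq_shearSet K K ▸ shearSet_mono (subset_mul_right K (by simpa using h1))⟩

lemma LDisjoint.mono {X : Type*} {L L' : Set (X × X)} {U : Set (Set X)} (hU : LDisjoint L U)
    (h : L' ⊆ L) : LDisjoint L' U :=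
  fun P hP P' hP' hne x hx y hy hxy => hU P hP P' hP' hne x hx y hy (h hxy)

lemma IsGenFamily.exists_one_mem_superset {F : Set (Set G)} (hF : IsGenFamily F) {B : Set G}
    (hB : B ∈ F) : ∃ K ∈ F, (1 : G) ∈ K ∧ B ⊆ K := by
  obtain ⟨A, hA, a, ha⟩ := hF.exists_nonempty
  refine ⟨B ∪ A⁻¹ * A, hF.union_mem _ hB _ (hF.mul_mem _ (hF.inv_mem _ hA) _ hA), ?_,
    subset_union_left⟩
  exact Or.inr ⟨a⁻¹, inv_mem_inv.mpr ha, a, ha, inv_mul_cancel a⟩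

/-- The group form of the covers in `asdimLE`: disjointness and boundedness are measured by
`y⁻¹ * x`. -/
structure IsShearCover {ι : Type*} (U : ι → Set (Set G)) (K D : Set G) : Prop where
  iUnion_sUnion : ⋃ i, ⋃₀ U i = univ
  ldisjoint : ∀ i, LDisjoint (shearSet K) (U i)
  bounded : ∀ i, ∀ P ∈ U i, P ×ˢ P ⊆ shearSet D

namespace IsShearCover

variable {ι κ : Type*} {U : ι → Set (Set G)} {K D : Set G}

lemma mono {K' D' : Set G} (hU : IsShearCover U K D) (hK : K' ⊆ K) (hD : D ⊆ D') :
    IsShearCover U K' D' where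
  iUnion_sUnion := hU.iUnion_sUnion
  ldisjoint i := (hU.ldisjoint i).mono (shearSet_mono hK)
  bounded i P hP := (hU.bounded i P hP).trans (shearSet_mono hD)

lemma comp (hU : IsShearCover U K D) {f : κ → ι} (hf : f.Surjective) :
    IsShearCover (U ∘ f) K D where
  iUnion_sUnion := by rw [← hU.iUnion_sUnion]; exact hf.iUnion_comp fun i => ⋃₀ U i
  ldisjoint j := hU.ldisjoint (f j)
  bounded j := hU.bounded (f j)

lemma exists_mem (hU : IsShearCover U K D) (x : G) : ∃ i, ∃ P ∈ U i, x ∈ P := by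
  have hx : x ∈ ⋃ i, ⋃₀ U i := hU.iUnion_sUnion ▸ mem_univ x
  simpa using hx

end IsShearCover

lemma asdimLE.exists_isShearCover {F : Set (Set G)} {n : ℕ} (h : asdimLE (EF F) n) {K : Set G}
    (hK : K ∈ F) (h1 : (1 : G) ∈ K) :
    ∃ U : Fin (n + 1) → Set (Set G), ∃ D ∈ F, IsShearCover U K (D⁻¹ * D) := by
  obtain ⟨U, hcov, hdisj, M, ⟨D, hD, hMD⟩, hbdd⟩ := h _ (shearSet_mem_EF hK h1)
  refine ⟨U, D, hD, hcov, hdisj, fun i P hP => ?_⟩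
  rw [← GProd_eq_shearSet]
  exact (hbdd P (mem_iUnion.mpr ⟨i, hP⟩)).trans hMD

lemma IsGenFamily.asdimLE_of_isShearCover {F : Set (Set G)} (hF : IsGenFamily F) {n : ℕ}
    (h : ∀ K ∈ F, (1 : G) ∈ K → ∃ U : Fin (n + 1) → Set (Set G), ∃ D ∈ F, IsShearCover U K D) :
    asdimLE (EF F) n := by
  intro L ⟨A, hA, hLA⟩
  obtain ⟨K, hK, h1K, hAK⟩ := hF.exists_one_mem_superset (hF.mul_mem _ (hF.inv_mem _ hA) _ hA)
  obtain ⟨U, D, hD, hU⟩ := h K hK h1K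
  obtain ⟨D', hD', h1D', hDD'⟩ := hF.exists_one_mem_superset hD
  refine ⟨U, hU.iUnion_sUnion, fun i => (hU.ldisjoint i).mono ?_, shearSet D',
    shearSet_mem_EF hD' h1D', fun P hP => ?_⟩
  · exact hLA.trans ((GProd_eq_shearSet A A).trans_subset (shearSet_mono hAK))
  · obtain ⟨i, hP⟩ := mem_iUnion.mp hP
    exact (hU.bounded i P hP).trans (shearSet_mono hDD')

section Extension

variable {N : Subgroup G} [N.Normal]

lemma IsShearCover.inv_mul_mem_of_mk_mem {κ : Type*} {V : κ → Set (Set (G ⧸ N))}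
    {K : Set (G ⧸ N)} {D : Set G} (hV : IsShearCover V K ((↑) '' D)) {j : κ} {P : Set (G ⧸ N)}
    (hP : P ∈ V j) {x y : G} (hx : (x : G ⧸ N) ∈ P) (hy : (y : G ⧸ N) ∈ P) :
    y⁻¹ * x ∈ (N : Set G) * D := by
  rw [← Subgroup.set_mul_normal_comm, ← QuotientGroup.preimage_image_mk_eq_mul]
  simpa using hV.bounded j P hP (mk_mem_prod hx hy)

/-- `g_P * S * D` over the quotient piece `P`, for a base point `g_P` chosen over `P`. -/
def extensionPiece (D : Set G) (P : Set (G ⧸ N)) (S : Set N) : Set G :=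
  {x | (x : G ⧸ N) ∈ P ∧
    ∃ ν ∈ S, ∃ d ∈ D, x = Classical.epsilon (fun g : G => (g : G ⧸ N) ∈ P) * ν * d}

theorem IsShearCover.extension {ι κ : Type*} {A C D : Set G} {U : ι → Set (Set N)}
    {V : κ → Set (Set (G ⧸ N))}
    (hU : IsShearCover U (Subtype.val ⁻¹' (D * A * D⁻¹)) (Subtype.val ⁻¹' C))
    (hV : IsShearCover V ((↑) '' A) ((↑) '' D)) :
    IsShearCover (fun ij : ι × κ =>
      (fun PS : Set (G ⧸ N) × Set N => extensionPiece D PS.1 PS.2) '' (V ij.2 ×ˢ U ij.1))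
      A (D⁻¹ * C * D) := by
  have shear_eq (g ν ν' d d' : G) : (g * ν' * d')⁻¹ * (g * ν * d) = d'⁻¹ * (ν'⁻¹ * ν) * d := by
    group
  refine ⟨eq_univ_of_forall fun x => ?_, ?_, ?_⟩
  · obtain ⟨j, P, hP, hxP⟩ := hV.exists_mem x
    set g := Classical.epsilon fun g : G => (g : G ⧸ N) ∈ P
    have hgP : (g : G ⧸ N) ∈ P :=
      Classical.epsilon_spec (p := fun g : G => (g : G ⧸ N) ∈ P) ⟨x, hxP⟩
    obtain ⟨ν, hν, d, hd, hνd : ν * d = g⁻¹ * x⟩ := hV.inv_mul_mem_of_mk_mem hP hxP hgP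
    obtain ⟨i, S, hS, hνS⟩ := hU.exists_mem ⟨ν, hν⟩
    refine mem_iUnion.mpr ⟨(i, j), extensionPiece D P S, ⟨(P, S), ⟨hP, hS⟩, rfl⟩,
      hxP, ⟨ν, hν⟩, hνS, d, hd, ?_⟩
    change x = g * ν * d
    rw [mul_assoc, hνd, mul_inv_cancel_left]
  · rintro ⟨i, j⟩ _ ⟨⟨P, S⟩, ⟨hP, hS⟩, rfl⟩ _ ⟨⟨P', S'⟩, ⟨hP', hS'⟩, rfl⟩ hne
      x ⟨hxP, ν, hν, d, hd, hx⟩ y ⟨hyP', ν', hν', d', hd', hy⟩ (hA : y⁻¹ * x ∈ A)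
    by_cases hPP : P = P'
    · subst hPP
      refine hU.ldisjoint i S hS S' hS' (fun h => hne (h ▸ rfl)) ν hν ν' hν' ?_
      rw [hx, hy, shear_eq] at hA
      show (ν' : G)⁻¹ * ν ∈ D * A * D⁻¹
      rw [show (ν' : G)⁻¹ * ν = d' * (d'⁻¹ * ((ν' : G)⁻¹ * ν) * d) * d⁻¹ by group]
      exact mul_mem_mul (mul_mem_mul hd' hA) (inv_mem_inv.mpr hd)
    · exact hV.ldisjoint j P hP P' hP' hPP _ hxP _ hyP' ⟨_, hA, by simp⟩
  · rintro ⟨i, j⟩ _ ⟨⟨P, S⟩, ⟨hP, hS⟩, rfl⟩ ⟨x, y⟩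
      ⟨⟨-, ν, hν, d, hd, rfl⟩, ⟨-, ν', hν', d', hd', rfl⟩⟩
    have hC : (ν' : G)⁻¹ * ν ∈ C := hU.bounded i S hS (mk_mem_prod hν hν')
    rw [mem_shearSet, shear_eq]
    exact mul_mem_mul (mul_mem_mul (inv_mem_inv.mpr hd') hC) hd

end Extension

end

theorem stmt_18_general {G : Type*} [Group G] (N : Subgroup G) [N.Normal]
    (F : Set (Set G)) (hF : IsGenFamily F) (n k : ℕ)
    (hN : asdimLE (EF (restrictFamily F N)) n)
    (hQ : asdimLE (EF ((fun A => (QuotientGroup.mk : G → G ⧸ N) '' A) '' F)) k) :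
    asdimLE (EF F) ((n + 1) * (k + 1) - 1) := by
  refine hF.asdimLE_of_isShearCover fun A hA h1A => ?_
  obtain ⟨V, _, ⟨D₀, hD₀, rfl⟩, hV⟩ :=
    hQ.exists_isShearCover (mem_image_of_mem _ hA) ⟨1, h1A, rfl⟩
  have hD : D₀⁻¹ * D₀ ∈ F := hF.mul_mem _ (hF.inv_mem _ hD₀) _ hD₀
  obtain ⟨B, hB, h1B, hDAD⟩ :=
    hF.exists_one_mem_superset (hF.mul_mem _ (hF.mul_mem _ hD _ hA) _ (hF.inv_mem _ hD))
  obtain ⟨U, _, ⟨C₀, hC₀, rfl⟩, hU⟩ := hN.exists_isShearCover ⟨B, hB, rfl⟩ h1B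
  have hC : C₀⁻¹ * C₀ ∈ F := hF.mul_mem _ (hF.inv_mem _ hC₀) _ hC₀
  have hUC :
      (Subtype.val ⁻¹' C₀ : Set N)⁻¹ * Subtype.val ⁻¹' C₀ ⊆ Subtype.val ⁻¹' (C₀⁻¹ * C₀) := by
    rintro _ ⟨a, ha, b, hb, rfl⟩
    exact ⟨a, ha, b, hb, rfl⟩
  have hVD : ((↑) '' D₀ : Set (G ⧸ N))⁻¹ * (↑) '' D₀ = (↑) '' (D₀⁻¹ * D₀) :=
    ((image_mul (QuotientGroup.mk' N)).trans (by rw [image_inv]; rfl)).symm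
  have hW := (hU.mono (preimage_mono hDAD) hUC).extension (hV.mono subset_rfl hVD.subset)
  let e : Fin ((n + 1) * (k + 1) - 1 + 1) ≃ Fin (n + 1) × Fin (k + 1) :=
    (finCongr (Nat.sub_add_cancel (Nat.one_le_iff_ne_zero.mpr (by positivity)))).trans
      finProdFinEquiv.symm
  exact ⟨_, _, hF.mul_mem _ (hF.mul_mem _ (hF.inv_mem _ hD) _ hC) _ hD, hW.comp e.surjective⟩

theorem stmt_18 {G : Type*} [Group G] (N : Subgroup G) [N.Normal]
    (F : Set (Set G)) (hF : IsGenFamily F) (hconn : ConnectedCoarse (EF F)) (n k : ℕ)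
    (hN : asdimLE (EF (restrictFamily F N)) n)
    (hQ : asdimLE (EF ((fun A => (QuotientGroup.mk : G → G ⧸ N) '' A) '' F)) k) :
    asdimLE (EF F) ((n + 1) * (k + 1) - 1) :=
  stmt_18_general N F hF n k hN hQ
end
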